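/- arXiv:1802.00284 — 9 statements merged into one kernel-verified Lean document; each statement's English description precedes it below -/
import Mathlib

section
/- Incremental asymptotic stability under strict passivity: let A ∈ ℝ^{n×n}, B ∈ ℝ^{n×m}, C ∈ ℝ^{m×n}, let γ > 0, and let P ∈ ℝ^{n×n} be symmetric positive definite with AᵀP + PA + 2γP ⪯ 0 and PB = Cᵀ, and let R ⊆ ℝ^m × ℝ^m be an incrementally passive relation. Let v ∈ ℝ^m be constant, and let x₁, x₂ : [0,∞) → ℝ^n be differentiable and u₁, u₂ : [0,∞) → ℝ^m be such that for all t ≥ 0 and i = 1,2: ẋᵢ(t) = A xᵢ(t) − B uᵢ(t) + B v and (C xᵢ(t), uᵢ(t)) ∈ R. Then ‖x₁(t) − x₂(t)‖ ≤ √(λ_max(P)/λ_min(P)) e^{−γ t} ‖x₁(0) − x₂(0)‖ for all t ≥ 0; in particular lim_{t→∞} ‖x₁(t) − x₂(t)‖ = 0. -/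
/-!
The error `e = x₁ - x₂` obeys `ė = A e - B (u₁ - u₂)`: the constant input `v` cancels. Along it
the storage function `V = eᵀ P e` satisfies `V̇ = eᵀ (AᵀP + PA) e - 2 (C e)ᵀ (u₁ - u₂) ≤ -2γ V`,
the first term by the matrix inequality and the second by incremental passivity of `R`, once
`PB = Cᵀ` has turned `eᵀ P B` into `(C e)ᵀ`. Grönwall gives `V t ≤ e^{-2γt} V 0`, and the Rayleigh
bounds `λ_min ‖e‖² ≤ V ≤ λ_max ‖e‖²` turn this into the bound on `‖e‖`.
-/

open Matrix WithLp Filter Real Topology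
open scoped RealInnerProductSpace

section Calculus

variable {𝕜 : Type*} [NontriviallyNormedField 𝕜] {ι κ : Type*} [Fintype ι]
  {f g : 𝕜 → ι → 𝕜} {f' g' : ι → 𝕜} {t : 𝕜}

theorem HasDerivAt.dotProduct (hf : HasDerivAt f f' t) (hg : HasDerivAt g g' t) :
    HasDerivAt (fun s => f s ⬝ᵥ g s) (f' ⬝ᵥ g t + f t ⬝ᵥ g') t := by
  simpa only [_root_.dotProduct, Finset.sum_add_distrib] using
    HasDerivAt.fun_sum (u := Finset.univ) fun i _ =>
      (hasDerivAt_pi.1 hf i).fun_mul (hasDerivAt_pi.1 hg i)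

theorem HasDerivAt.mulVec (M : Matrix κ ι 𝕜) (hf : HasDerivAt f f' t) :
    HasDerivAt (fun s => M *ᵥ f s) (M *ᵥ f') t :=
  hasDerivAt_pi.2 fun i =>
    ((hasDerivAt_const t (M i)).dotProduct hf).congr_deriv
      (by rw [zero_dotProduct, zero_add]; rfl)

end Calculus

theorem le_mul_exp_of_hasDerivAt_le_mul {f f' : ℝ → ℝ} {K : ℝ}
    (hf : ∀ t ≥ 0, HasDerivAt f (f' t) t) (hbound : ∀ t ≥ 0, f' t ≤ K * f t)
    {t : ℝ} (ht : 0 ≤ t) : f t ≤ f 0 * exp (K * t) := by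
  have h := le_gronwallBound_of_liminf_deriv_right_le (f' := f') (ε := 0) (a := 0) (b := t)
    (fun s hs => (hf s hs.1).continuousAt.continuousWithinAt)
    (fun s hs r hr => by
      simpa only [slope, vsub_eq_sub, smul_eq_mul] using
        (hf s hs.1).hasDerivWithinAt.liminf_right_slope_le hr)
    le_rfl (fun s hs => by simpa using hbound s hs.1) t ⟨ht, le_rfl⟩
  simpa [gronwallBound_ε0] using h

theorem tendsto_nhds_zero_of_le_mul_exp_neg {f : ℝ → ℝ} {γ K : ℝ} (hγ : 0 < γ)
    (hf₀ : ∀ t, 0 ≤ f t) (hf : ∀ t ≥ 0, f t ≤ K * exp (-γ * t)) :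
    Tendsto f atTop (𝓝 0) := by
  have hexp : Tendsto (fun t => exp (-γ * t)) atTop (𝓝 0) :=
    Real.tendsto_exp_comp_nhds_zero.2 (tendsto_id.const_mul_atTop_of_neg (neg_neg_of_pos hγ))
  simpa using squeeze_zero' (Eventually.of_forall hf₀) ((eventually_ge_atTop 0).mono hf)
    (by simpa using hexp.const_mul K)

section Rayleigh

variable {ι : Type*} [Fintype ι] [DecidableEq ι] {P : Matrix ι ι ℝ}

theorem Matrix.IsHermitian.dotProduct_mulVec_eq_sum_eigenvalues (hP : P.IsHermitian)
    (y : EuclideanSpace ℝ ι) :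
    ofLp y ⬝ᵥ P *ᵥ ofLp y = ∑ i, hP.eigenvalues i * ⟪hP.eigenvectorBasis i, y⟫ ^ 2 := by
  set b := hP.eigenvectorBasis
  have hb : ∀ i, toEuclideanLin P (b i) = hP.eigenvalues i • b i := fun i => by
    ext j
    simpa using congrFun (hP.mulVec_eigenvectorBasis i) j
  have hcoord : ∀ i, ⟪b i, toEuclideanLin P y⟫ = hP.eigenvalues i * ⟪b i, y⟫ := fun i => by
    rw [← isSymmetric_toEuclideanLin_iff.mpr hP, hb, real_inner_smul_left]
  calc ofLp y ⬝ᵥ P *ᵥ ofLp y = ⟪y, toEuclideanLin P y⟫ := by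
        simp [EuclideanSpace.inner_eq_star_dotProduct, dotProduct_comm]
    _ = ∑ i, ⟪y, b i⟫ * ⟪b i, toEuclideanLin P y⟫ := (b.sum_inner_mul_inner _ _).symm
    _ = ∑ i, hP.eigenvalues i * ⟪b i, y⟫ ^ 2 := by
        simp only [hcoord, real_inner_comm y]
        exact Finset.sum_congr rfl fun i _ => by ring

theorem Matrix.IsHermitian.iInf_eigenvalues_mul_norm_sq_le (hP : P.IsHermitian)
    (y : EuclideanSpace ℝ ι) :
    (⨅ i, hP.eigenvalues i) * ‖y‖ ^ 2 ≤ ofLp y ⬝ᵥ P *ᵥ ofLp y := by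
  rw [hP.dotProduct_mulVec_eq_sum_eigenvalues, ← hP.eigenvectorBasis.sum_sq_inner_right y,
    Finset.mul_sum]
  exact Finset.sum_le_sum fun i _ =>
    mul_le_mul_of_nonneg_right (ciInf_le (Finite.bddBelow_range _) i) (sq_nonneg _)

theorem Matrix.IsHermitian.dotProduct_mulVec_le_iSup_eigenvalues_mul_norm_sq
    (hP : P.IsHermitian) (y : EuclideanSpace ℝ ι) :
    ofLp y ⬝ᵥ P *ᵥ ofLp y ≤ (⨆ i, hP.eigenvalues i) * ‖y‖ ^ 2 := by
  rw [hP.dotProduct_mulVec_eq_sum_eigenvalues, ← hP.eigenvectorBasis.sum_sq_inner_right y,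
    Finset.mul_sum]
  exact Finset.sum_le_sum fun i _ =>
    mul_le_mul_of_nonneg_right (le_ciSup (Finite.bddAbove_range _) i) (sq_nonneg _)

theorem Matrix.PosDef.norm_le_of_dotProduct_mulVec_le (hP : P.PosDef)
    {y z : EuclideanSpace ℝ ι} {c : ℝ} (hc : 0 ≤ c)
    (h : ofLp y ⬝ᵥ P *ᵥ ofLp y ≤ c ^ 2 * (ofLp z ⬝ᵥ P *ᵥ ofLp z)) :
    ‖y‖ ≤ √((⨆ i, hP.1.eigenvalues i) / (⨅ i, hP.1.eigenvalues i)) * c * ‖z‖ := by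
  rcases isEmpty_or_nonempty ι with hι | hι
  · rw [Subsingleton.elim y 0, norm_zero]
    positivity
  set lmax := ⨆ i, hP.1.eigenvalues i
  set lmin := ⨅ i, hP.1.eigenvalues i
  have hmin : 0 < lmin := by
    obtain ⟨i, hi⟩ := exists_eq_ciInf_of_finite (f := hP.1.eigenvalues)
    exact (hP.eigenvalues_pos i).trans_eq hi
  have hmax : 0 < lmax := (hP.eigenvalues_pos (Classical.arbitrary ι)).trans_le
    (le_ciSup (Finite.bddAbove_range _) _)
  have hsq : lmin * ‖y‖ ^ 2 ≤ lmin * (lmax / lmin * c ^ 2 * ‖z‖ ^ 2) := calc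
    lmin * ‖y‖ ^ 2 ≤ ofLp y ⬝ᵥ P *ᵥ ofLp y := hP.1.iInf_eigenvalues_mul_norm_sq_le y
    _ ≤ c ^ 2 * (ofLp z ⬝ᵥ P *ᵥ ofLp z) := h
    _ ≤ c ^ 2 * (lmax * ‖z‖ ^ 2) := by
      gcongr; exact hP.1.dotProduct_mulVec_le_iSup_eigenvalues_mul_norm_sq z
    _ = lmin * (lmax / lmin * c ^ 2 * ‖z‖ ^ 2) := by field_simp
  have hsq' : ‖y‖ ^ 2 ≤ (√(lmax / lmin) * c * ‖z‖) ^ 2 := by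
    rw [mul_pow, mul_pow, sq_sqrt (by positivity)]
    exact le_of_mul_le_mul_left hsq hmin
  exact (pow_le_pow_iff_left₀ (norm_nonneg _) (by positivity) two_ne_zero).1 hsq'

end Rayleigh

section Dissipation

variable {ι κ : Type*} [Fintype ι] [Fintype κ] {A P : Matrix ι ι ℝ} {B : Matrix ι κ ℝ}
  {C : Matrix κ ι ℝ}

theorem Matrix.IsSymm.dotProduct_mulVec_comm (hP : P.IsSymm) (y z : ι → ℝ) :
    z ⬝ᵥ P *ᵥ y = y ⬝ᵥ P *ᵥ z := by
  rw [dotProduct_mulVec, ← mulVec_transpose, hP.eq, dotProduct_comm]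

theorem dotProduct_mulVec_add_le_of_passive {γ : ℝ} (hPsymm : P.IsSymm)
    (hA : (-(Aᵀ * P + P * A + (2 * γ) • P)).PosSemidef) (hPB : P * B = Cᵀ)
    {y : ι → ℝ} {w : κ → ℝ} (hyw : 0 ≤ (C *ᵥ y) ⬝ᵥ w) :
    (A *ᵥ y - B *ᵥ w) ⬝ᵥ P *ᵥ y + y ⬝ᵥ P *ᵥ (A *ᵥ y - B *ᵥ w) ≤ -(2 * γ) * (y ⬝ᵥ P *ᵥ y) := by
  have hLMI : y ⬝ᵥ (Aᵀ * P + P * A + (2 * γ) • P) *ᵥ y ≤ 0 := by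
    have h := hA.dotProduct_mulVec_nonneg y
    rwa [star_trivial, neg_mulVec, dotProduct_neg, neg_nonneg] at h
  have hexpand : y ⬝ᵥ (Aᵀ * P + P * A + (2 * γ) • P) *ᵥ y
      = 2 * (y ⬝ᵥ P *ᵥ (A *ᵥ y)) + 2 * γ * (y ⬝ᵥ P *ᵥ y) := by
    rw [add_mulVec, add_mulVec, smul_mulVec, ← mulVec_mulVec, ← mulVec_mulVec, dotProduct_add,
      dotProduct_add, dotProduct_smul, dotProduct_mulVec y Aᵀ, vecMul_transpose,
      hPsymm.dotProduct_mulVec_comm, smul_eq_mul]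
    ring
  have hBw : y ⬝ᵥ P *ᵥ (B *ᵥ w) = (C *ᵥ y) ⬝ᵥ w := by
    rw [mulVec_mulVec, hPB, dotProduct_mulVec, vecMul_transpose]
  rw [hPsymm.dotProduct_mulVec_comm, mulVec_sub, dotProduct_sub, hBw]
  linarith

end Dissipation

theorem hasDerivAt_ofLp_sub_of_hasDerivAt {ι κ : Type*} [Fintype ι] [Fintype κ]
    {A : Matrix ι ι ℝ} {B : Matrix ι κ ℝ} {v : κ → ℝ} {x₁ x₂ : ℝ → EuclideanSpace ℝ ι}
    {u₁ u₂ : ℝ → κ → ℝ} {t : ℝ}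
    (h₁ : HasDerivAt x₁ (toLp 2 (A *ᵥ x₁ t - B *ᵥ u₁ t + B *ᵥ v)) t)
    (h₂ : HasDerivAt x₂ (toLp 2 (A *ᵥ x₂ t - B *ᵥ u₂ t + B *ᵥ v)) t) :
    HasDerivAt (fun s => ofLp (x₁ s - x₂ s)) (A *ᵥ ofLp (x₁ t - x₂ t) - B *ᵥ (u₁ t - u₂ t)) t :=
  ((PiLp.hasFDerivAt_ofLp 2 _).comp_hasDerivAt t (h₁.sub h₂)).congr_deriv (by
    simp only [ContinuousLinearEquiv.coe_coe, PiLp.coe_continuousLinearEquiv, ofLp_sub,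
      mulVec_sub]
    abel)

/-- Incremental asymptotic stability under strict passivity: if `P = Pᵀ ≻ 0`
satisfies `AᵀP + PA + 2γP ⪯ 0` (with `γ > 0`) and `PB = Cᵀ`, and `R` is an
incrementally passive relation, then for any two closed-loop trajectories
`‖Δx(t)‖ ≤ √(λmax(P)/λmin(P)) e^{−γt} ‖Δx(0)‖`, so `‖Δx(t)‖ → 0` as `t → ∞`. -/
theorem closed_loop_incremental_asymptotic_stability
    (n m : ℕ) (A : Matrix (Fin n) (Fin n) ℝ) (B : Matrix (Fin n) (Fin m) ℝ)
    (C : Matrix (Fin m) (Fin n) ℝ) (γ : ℝ) (hγ : 0 < γ)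
    (P : Matrix (Fin n) (Fin n) ℝ) (hPsymm : P.IsSymm) (hPpos : P.PosDef)
    (hA : (-(Aᵀ * P + P * A + (2 * γ) • P)).PosSemidef) (hPB : P * B = Cᵀ)
    (R : Set ((Fin m → ℝ) × (Fin m → ℝ)))
    (hR : ∀ p ∈ R, ∀ q ∈ R, 0 ≤ (p.1 - q.1) ⬝ᵥ (p.2 - q.2))
    (v : Fin m → ℝ)
    (x₁ x₂ : ℝ → EuclideanSpace ℝ (Fin n)) (u₁ u₂ : ℝ → (Fin m → ℝ))
    (hx₁ : ∀ t ≥ (0:ℝ), HasDerivAt x₁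
      (WithLp.toLp 2 (A.mulVec (x₁ t) - B.mulVec (u₁ t) + B.mulVec v : Fin n → ℝ) :
        EuclideanSpace ℝ (Fin n)) t)
    (hx₂ : ∀ t ≥ (0:ℝ), HasDerivAt x₂
      (WithLp.toLp 2 (A.mulVec (x₂ t) - B.mulVec (u₂ t) + B.mulVec v : Fin n → ℝ) :
        EuclideanSpace ℝ (Fin n)) t)
    (hR₁ : ∀ t ≥ (0:ℝ), (C.mulVec (x₁ t), u₁ t) ∈ R)
    (hR₂ : ∀ t ≥ (0:ℝ), (C.mulVec (x₂ t), u₂ t) ∈ R) :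
    (∀ t ≥ (0:ℝ),
      ‖x₁ t - x₂ t‖ ≤
        Real.sqrt ((⨆ i, hPpos.1.eigenvalues i) / (⨅ i, hPpos.1.eigenvalues i)) *
          Real.exp (-γ * t) * ‖x₁ 0 - x₂ 0‖) ∧
    Filter.Tendsto (fun t => ‖x₁ t - x₂ t‖) Filter.atTop (nhds 0) := by
  set y := fun s => ofLp (x₁ s - x₂ s)
  set w := fun s => u₁ s - u₂ s
  set V := fun s => y s ⬝ᵥ P *ᵥ y s
  have hy : ∀ t ≥ 0, HasDerivAt y (A *ᵥ y t - B *ᵥ w t) t := fun t ht =>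
    hasDerivAt_ofLp_sub_of_hasDerivAt (hx₁ t ht) (hx₂ t ht)
  have hV : ∀ t ≥ 0, HasDerivAt V
      ((A *ᵥ y t - B *ᵥ w t) ⬝ᵥ P *ᵥ y t + y t ⬝ᵥ P *ᵥ (A *ᵥ y t - B *ᵥ w t)) t := fun t ht =>
    (hy t ht).dotProduct ((hy t ht).mulVec P)
  have hdissipation : ∀ t ≥ 0, (A *ᵥ y t - B *ᵥ w t) ⬝ᵥ P *ᵥ y t
      + y t ⬝ᵥ P *ᵥ (A *ᵥ y t - B *ᵥ w t) ≤ -(2 * γ) * V t := fun t ht =>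
    dotProduct_mulVec_add_le_of_passive hPsymm hA hPB
      (by simpa [y, w, mulVec_sub] using hR _ (hR₁ t ht) _ (hR₂ t ht))
  have hbound : ∀ t ≥ 0, ‖x₁ t - x₂ t‖ ≤ √((⨆ i, hPpos.1.eigenvalues i) /
      (⨅ i, hPpos.1.eigenvalues i)) * exp (-γ * t) * ‖x₁ 0 - x₂ 0‖ := fun t ht =>
    hPpos.norm_le_of_dotProduct_mulVec_le (exp_pos _).le <| calc
      V t ≤ V 0 * exp (-(2 * γ) * t) := le_mul_exp_of_hasDerivAt_le_mul hV hdissipation ht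
      _ = exp (-γ * t) ^ 2 * V 0 := by rw [sq, ← exp_add]; ring_nf
  exact ⟨hbound, tendsto_nhds_zero_of_le_mul_exp_neg hγ (fun _ => norm_nonneg _)
    fun t ht => (hbound t ht).trans_eq (mul_right_comm _ _ _)⟩
end

section
/- Injectivity of the dominant projection: let P ∈ ℝ^{n×n} be symmetric, let H and V be subspaces of ℝ^n with ℝ^n = H ⊕ V, and suppose zᵀPz > 0 for every nonzero z ∈ V. Let Π : ℝ^n → ℝ^n be the linear projection onto H along V. If S ⊆ ℝ^n is a set such that (x̄₁ − x̄₂)ᵀ P (x̄₁ − x̄₂) < 0 for every pair of distinct points x̄₁, x̄₂ ∈ S, then the restriction of Π to S is injective. -/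
open Matrix

lemma Submodule.sub_mem_of_map_eq {R M : Type*} [Ring R] [AddCommGroup M] [Module R M]
    {V : Submodule R M} {f : M → M} (hf : ∀ x, x - f x ∈ V) {x y : M} (hxy : f x = f y) :
    x - y ∈ V := by
  have h := V.sub_mem (hf x) (hf y)
  rwa [hxy, sub_sub_sub_cancel_right] at h

theorem dominant_projection_injective_general
    (n : ℕ) (P : Matrix (Fin n) (Fin n) ℝ)
    (H V : Submodule ℝ (Fin n → ℝ))
    (hVpos : ∀ z ∈ V, z ≠ 0 → 0 < z ⬝ᵥ P.mulVec z)
    (proj : (Fin n → ℝ) →ₗ[ℝ] (Fin n → ℝ))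
    (hproj : ∀ x, proj x ∈ H ∧ x - proj x ∈ V)
    (S : Set (Fin n → ℝ))
    (hS : ∀ x₁ ∈ S, ∀ x₂ ∈ S, x₁ ≠ x₂ → (x₁ - x₂) ⬝ᵥ P.mulVec (x₁ - x₂) < 0) :
    Set.InjOn proj S := by
  intro x₁ hx₁ x₂ hx₂ hproj_eq
  by_contra hne
  have hV : x₁ - x₂ ∈ V := Submodule.sub_mem_of_map_eq (fun x => (hproj x).2) hproj_eq
  exact (hS x₁ hx₁ x₂ hx₂ hne).not_gt (hVpos _ hV (sub_ne_zero.mpr hne))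

/-- Injectivity of the dominant projection: let `P` be symmetric, `ℝⁿ = H ⊕ V`,
with `zᵀPz > 0` for all nonzero `z ∈ V`, and let `Π` be the projection onto `H`
along `V`. If on a set `S` every increment of distinct points satisfies
`(Δx̄)ᵀ P Δx̄ < 0`, then `Π` restricted to `S` is injective. -/
theorem dominant_projection_injective
    (n : ℕ) (P : Matrix (Fin n) (Fin n) ℝ) (hPsymm : P.IsSymm)
    (H V : Submodule ℝ (Fin n → ℝ)) (hHV : IsCompl H V)
    (hVpos : ∀ z ∈ V, z ≠ 0 → 0 < z ⬝ᵥ P.mulVec z)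
    (proj : (Fin n → ℝ) →ₗ[ℝ] (Fin n → ℝ))
    (hproj : ∀ x, proj x ∈ H ∧ x - proj x ∈ V)
    (S : Set (Fin n → ℝ))
    (hS : ∀ x₁ ∈ S, ∀ x₂ ∈ S, x₁ ≠ x₂ → (x₁ - x₂) ⬝ᵥ P.mulVec (x₁ - x₂) < 0) :
    Set.InjOn proj S :=
  dominant_projection_injective_general n P H V hVpos proj hproj S hS
end

section
/- Interconnection of p-dissipative systems (pointwise form): for i = 1,2, let Pᵢ ∈ ℝ^{nᵢ×nᵢ} be symmetric, γ ≥ 0, εᵢ ≥ 0, and let Qᵢ, Lᵢ, Rᵢ ∈ ℝ^{m×m} with Qᵢ, Rᵢ symmetric. Suppose vectors Δẋⁱ, Δxⁱ ∈ ℝ^{nᵢ} and Δuⁱ, Δyⁱ ∈ ℝ^m satisfy, for i = 1,2, the dissipation inequality 2 (Δẋⁱ)ᵀ Pᵢ Δxⁱ + (Δxⁱ)ᵀ (2γPᵢ + εᵢ I) Δxⁱ ≤ [Δyⁱ; Δuⁱ]ᵀ [[Qᵢ, Lᵢ],[Lᵢᵀ, Rᵢ]] [Δyⁱ; Δuⁱ],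 together with the negative feedback interconnection Δu¹ = −Δy² + Δv¹, Δu² = Δy¹ + Δv². Then, with P = blockdiag(P₁, P₂), Δx = [Δx¹; Δx²], Δẋ = [Δẋ¹; Δẋ²], Δy = [Δy¹; Δy²], Δv = [Δv¹; Δv²], and ε = min{ε₁, ε₂}, one has 2 Δẋᵀ P Δx + Δxᵀ (2γP + εI) Δx ≤ [Δy; Δv]ᵀ M [Δy; Δv], where M is the block matrix [[Q₁ + R₂, −L₁ + L₂ᵀ, L₁, R₂], [−L₁ᵀ + L₂, Q₂ + R₁, −R₁, L₂], [L₁ᵀ, −R₁ᵀ, R₁, 0], [R₂, L₂ᵀ, 0, R₂]]. -/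
/-!
The storage `blockdiag(P₁, P₂)` splits the dissipation rate of the interconnection into the sum
of the two subsystems' rates, and lowering `εᵢ` to `min ε₁ ε₂` only lowers them. On the other
side, substituting the feedback law `u₁ = -y₂ + v₁`, `u₂ = y₁ + v₂` into the two supply rates
and adding gives exactly the quadratic form of `M` in `(y, v)`, once each cross term
`yᵀ Rᵢ v`, which `M` splits between its two off-diagonal blocks, is symmetrized.
-/

open Matrix

section Blocks

variable {ι κ ι' κ' α : Type*} [Fintype ι] [Fintype κ] [Fintype ι'] [Fintype κ']

theorem sumElim_dotProduct_fromBlocks_mulVec_sumElim [NonUnitalNonAssocSemiring α]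
    (a : ι → α) (b : κ → α) (c : ι' → α) (d : κ' → α) (A : Matrix ι ι' α) (B : Matrix ι κ' α)
    (C : Matrix κ ι' α) (D : Matrix κ κ' α) :
    Sum.elim a b ⬝ᵥ fromBlocks A B C D *ᵥ Sum.elim c d =
      a ⬝ᵥ A *ᵥ c + a ⬝ᵥ B *ᵥ d + (b ⬝ᵥ C *ᵥ c + b ⬝ᵥ D *ᵥ d) := by
  simp only [fromBlocks_mulVec, sumElim_dotProduct_sumElim, dotProduct_add, Sum.elim_comp_inl,
    Sum.elim_comp_inr]

end Blocks

section Dissipativity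

variable {ι κ α : Type*} [Fintype ι] [Fintype κ] [DecidableEq ι] [CommRing α]

def dissipationRate (P : Matrix ι ι α) (γ ε : α) (xdot x : ι → α) : α :=
  2 * (xdot ⬝ᵥ P *ᵥ x) + x ⬝ᵥ ((2 * γ) • P + ε • 1) *ᵥ x

def supplyRate (Q L R : Matrix κ κ α) (y u : κ → α) : α :=
  Sum.elim y u ⬝ᵥ fromBlocks Q L Lᵀ R *ᵥ Sum.elim y u

theorem dissipationRate_fromBlocks_diagonal [DecidableEq κ] (P₁ : Matrix ι ι α)
    (P₂ : Matrix κ κ α) (γ ε : α) (xdot₁ x₁ : ι → α) (xdot₂ x₂ : κ → α) :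
    dissipationRate (fromBlocks P₁ 0 0 P₂) γ ε (Sum.elim xdot₁ xdot₂) (Sum.elim x₁ x₂) =
      dissipationRate P₁ γ ε xdot₁ x₁ + dissipationRate P₂ γ ε xdot₂ x₂ := by
  have hblock : (2 * γ) • fromBlocks P₁ 0 0 P₂ + ε • (1 : Matrix (ι ⊕ κ) (ι ⊕ κ) α) =
      fromBlocks ((2 * γ) • P₁ + ε • 1) 0 0 ((2 * γ) • P₂ + ε • 1) := by
    rw [← fromBlocks_one, fromBlocks_smul, fromBlocks_smul, fromBlocks_add]
    simp only [smul_zero, add_zero]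
  simp only [dissipationRate, hblock, sumElim_dotProduct_fromBlocks_mulVec_sumElim,
    zero_mulVec, dotProduct_zero, add_zero, zero_add]
  ring

theorem dissipationRate_mono [LinearOrder α] [IsStrictOrderedRing α] (P : Matrix ι ι α)
    (γ : α) {ε ε' : α} (hε : ε ≤ ε') (xdot x : ι → α) :
    dissipationRate P γ ε xdot x ≤ dissipationRate P γ ε' xdot x := by
  have hx : 0 ≤ x ⬝ᵥ x := Fintype.sum_nonneg fun i => mul_self_nonneg (x i)
  simp only [dissipationRate, add_mulVec, smul_mulVec, one_mulVec, dotProduct_add,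
    dotProduct_smul, smul_eq_mul]
  gcongr

theorem supplyRate_eq (Q L R : Matrix κ κ α) (y u : κ → α) :
    supplyRate Q L R y u = y ⬝ᵥ Q *ᵥ y + 2 * (y ⬝ᵥ L *ᵥ u) + u ⬝ᵥ R *ᵥ u := by
  rw [supplyRate, sumElim_dotProduct_fromBlocks_mulVec_sumElim, dotProduct_transpose_mulVec]
  ring

theorem supplyRate_add_supplyRate_feedback (Q₁ L₁ R₁ Q₂ L₂ R₂ : Matrix κ κ α)
    (hR₁ : R₁.IsSymm) (hR₂ : R₂.IsSymm) (y₁ y₂ v₁ v₂ : κ → α) :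
    supplyRate Q₁ L₁ R₁ y₁ (-y₂ + v₁) + supplyRate Q₂ L₂ R₂ y₂ (y₁ + v₂) =
      Sum.elim (Sum.elim y₁ y₂) (Sum.elim v₁ v₂) ⬝ᵥ
        fromBlocks
          (fromBlocks (Q₁ + R₂) (-L₁ + L₂ᵀ) (-L₁ᵀ + L₂) (Q₂ + R₁))
          (fromBlocks L₁ R₂ (-R₁) L₂)
          (fromBlocks L₁ᵀ (-R₁ᵀ) R₂ L₂ᵀ)
          (fromBlocks R₁ 0 0 R₂) *ᵥ
        Sum.elim (Sum.elim y₁ y₂) (Sum.elim v₁ v₂) := by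
  have hswap₁ (a b : κ → α) : a ⬝ᵥ R₁ *ᵥ b = b ⬝ᵥ R₁ *ᵥ a := by
    rw [← dotProduct_transpose_mulVec, hR₁.eq]
  have hswap₂ (a b : κ → α) : a ⬝ᵥ R₂ *ᵥ b = b ⬝ᵥ R₂ *ᵥ a := by
    rw [← dotProduct_transpose_mulVec, hR₂.eq]
  simp only [supplyRate_eq, sumElim_dotProduct_fromBlocks_mulVec_sumElim, add_mulVec,
    neg_mulVec, mulVec_add, mulVec_neg, zero_mulVec, dotProduct_add, add_dotProduct,
    dotProduct_neg, neg_dotProduct, dotProduct_zero, dotProduct_transpose_mulVec]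
  rw [hswap₁ y₂ v₁, hswap₂ v₂ y₁]
  ring

end Dissipativity

theorem interconnection_p_dissipative_general
    (n₁ n₂ m : ℕ)
    (P₁ : Matrix (Fin n₁) (Fin n₁) ℝ)
    (P₂ : Matrix (Fin n₂) (Fin n₂) ℝ)
    (γ : ℝ) (ε₁ ε₂ : ℝ)
    (Q₁ L₁ R₁ Q₂ L₂ R₂ : Matrix (Fin m) (Fin m) ℝ)
    (hR₁ : R₁.IsSymm) (hR₂ : R₂.IsSymm)
    (Δxdot₁ Δx₁ : Fin n₁ → ℝ) (Δxdot₂ Δx₂ : Fin n₂ → ℝ)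
    (Δu₁ Δy₁ Δu₂ Δy₂ Δv₁ Δv₂ : Fin m → ℝ)
    (hdiss₁ : 2 * (Δxdot₁ ⬝ᵥ P₁.mulVec Δx₁) + Δx₁ ⬝ᵥ ((2 * γ) • P₁ + ε₁ • 1).mulVec Δx₁ ≤
      (Sum.elim Δy₁ Δu₁) ⬝ᵥ (Matrix.fromBlocks Q₁ L₁ L₁ᵀ R₁).mulVec (Sum.elim Δy₁ Δu₁))
    (hdiss₂ : 2 * (Δxdot₂ ⬝ᵥ P₂.mulVec Δx₂) + Δx₂ ⬝ᵥ ((2 * γ) • P₂ + ε₂ • 1).mulVec Δx₂ ≤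
      (Sum.elim Δy₂ Δu₂) ⬝ᵥ (Matrix.fromBlocks Q₂ L₂ L₂ᵀ R₂).mulVec (Sum.elim Δy₂ Δu₂))
    (hint₁ : Δu₁ = -Δy₂ + Δv₁) (hint₂ : Δu₂ = Δy₁ + Δv₂) :
    2 * ((Sum.elim Δxdot₁ Δxdot₂) ⬝ᵥ (Matrix.fromBlocks P₁ 0 0 P₂).mulVec (Sum.elim Δx₁ Δx₂)) +
      (Sum.elim Δx₁ Δx₂) ⬝ᵥ
        ((2 * γ) • (Matrix.fromBlocks P₁ 0 0 P₂) + (min ε₁ ε₂) • 1).mulVec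
          (Sum.elim Δx₁ Δx₂) ≤
      (Sum.elim (Sum.elim Δy₁ Δy₂) (Sum.elim Δv₁ Δv₂)) ⬝ᵥ
        (Matrix.fromBlocks
          (Matrix.fromBlocks (Q₁ + R₂) (-L₁ + L₂ᵀ) (-L₁ᵀ + L₂) (Q₂ + R₁))
          (Matrix.fromBlocks L₁ R₂ (-R₁) L₂)
          (Matrix.fromBlocks L₁ᵀ (-R₁ᵀ) R₂ L₂ᵀ)
          (Matrix.fromBlocks R₁ 0 0 R₂)).mulVec
        (Sum.elim (Sum.elim Δy₁ Δy₂) (Sum.elim Δv₁ Δv₂)) := by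
  subst hint₁ hint₂
  calc _ = dissipationRate P₁ γ (min ε₁ ε₂) Δxdot₁ Δx₁ +
          dissipationRate P₂ γ (min ε₁ ε₂) Δxdot₂ Δx₂ :=
        dissipationRate_fromBlocks_diagonal P₁ P₂ γ _ Δxdot₁ Δx₁ Δxdot₂ Δx₂
    _ ≤ dissipationRate P₁ γ ε₁ Δxdot₁ Δx₁ + dissipationRate P₂ γ ε₂ Δxdot₂ Δx₂ :=
        add_le_add (dissipationRate_mono P₁ γ (min_le_left ε₁ ε₂) Δxdot₁ Δx₁)
          (dissipationRate_mono P₂ γ (min_le_right ε₁ ε₂) Δxdot₂ Δx₂)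
    _ ≤ supplyRate Q₁ L₁ R₁ Δy₁ (-Δy₂ + Δv₁) + supplyRate Q₂ L₂ R₂ Δy₂ (Δy₁ + Δv₂) :=
        add_le_add hdiss₁ hdiss₂
    _ = _ := supplyRate_add_supplyRate_feedback Q₁ L₁ R₁ Q₂ L₂ R₂ hR₁ hR₂ Δy₁ Δy₂ Δv₁ Δv₂

/-- Interconnection of p-dissipative systems (pointwise form): if each system
satisfies its incremental dissipation inequality with common rate `γ`, and the
systems are interconnected in negative feedback `Δu¹ = −Δy² + Δv¹`,
`Δu² = Δy¹ + Δv²`, then the interconnection satisfies the incremental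
dissipation inequality with storage `blockdiag(P₁,P₂)`, `ε = min{ε₁,ε₂}` and
the aggregate supply matrix `M`. -/
theorem interconnection_p_dissipative
    (n₁ n₂ m : ℕ)
    (P₁ : Matrix (Fin n₁) (Fin n₁) ℝ) (hP₁ : P₁.IsSymm)
    (P₂ : Matrix (Fin n₂) (Fin n₂) ℝ) (hP₂ : P₂.IsSymm)
    (γ : ℝ) (hγ : 0 ≤ γ) (ε₁ ε₂ : ℝ) (hε₁ : 0 ≤ ε₁) (hε₂ : 0 ≤ ε₂)
    (Q₁ L₁ R₁ Q₂ L₂ R₂ : Matrix (Fin m) (Fin m) ℝ)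
    (hQ₁ : Q₁.IsSymm) (hR₁ : R₁.IsSymm) (hQ₂ : Q₂.IsSymm) (hR₂ : R₂.IsSymm)
    (Δxdot₁ Δx₁ : Fin n₁ → ℝ) (Δxdot₂ Δx₂ : Fin n₂ → ℝ)
    (Δu₁ Δy₁ Δu₂ Δy₂ Δv₁ Δv₂ : Fin m → ℝ)
    (hdiss₁ : 2 * (Δxdot₁ ⬝ᵥ P₁.mulVec Δx₁) + Δx₁ ⬝ᵥ ((2 * γ) • P₁ + ε₁ • 1).mulVec Δx₁ ≤
      (Sum.elim Δy₁ Δu₁) ⬝ᵥ (Matrix.fromBlocks Q₁ L₁ L₁ᵀ R₁).mulVec (Sum.elim Δy₁ Δu₁))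
    (hdiss₂ : 2 * (Δxdot₂ ⬝ᵥ P₂.mulVec Δx₂) + Δx₂ ⬝ᵥ ((2 * γ) • P₂ + ε₂ • 1).mulVec Δx₂ ≤
      (Sum.elim Δy₂ Δu₂) ⬝ᵥ (Matrix.fromBlocks Q₂ L₂ L₂ᵀ R₂).mulVec (Sum.elim Δy₂ Δu₂))
    (hint₁ : Δu₁ = -Δy₂ + Δv₁) (hint₂ : Δu₂ = Δy₁ + Δv₂) :
    2 * ((Sum.elim Δxdot₁ Δxdot₂) ⬝ᵥ (Matrix.fromBlocks P₁ 0 0 P₂).mulVec (Sum.elim Δx₁ Δx₂)) +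
      (Sum.elim Δx₁ Δx₂) ⬝ᵥ
        ((2 * γ) • (Matrix.fromBlocks P₁ 0 0 P₂) + (min ε₁ ε₂) • 1).mulVec
          (Sum.elim Δx₁ Δx₂) ≤
      (Sum.elim (Sum.elim Δy₁ Δy₂) (Sum.elim Δv₁ Δv₂)) ⬝ᵥ
        (Matrix.fromBlocks
          (Matrix.fromBlocks (Q₁ + R₂) (-L₁ + L₂ᵀ) (-L₁ᵀ + L₂) (Q₂ + R₁))
          (Matrix.fromBlocks L₁ R₂ (-R₁) L₂)
          (Matrix.fromBlocks L₁ᵀ (-R₁ᵀ) R₂ L₂ᵀ)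
          (Matrix.fromBlocks R₁ 0 0 R₂)).mulVec
        (Sum.elim (Sum.elim Δy₁ Δy₂) (Sum.elim Δv₁ Δv₂)) :=
  interconnection_p_dissipative_general n₁ n₂ m P₁ P₂ γ ε₁ ε₂ Q₁ L₁ R₁ Q₂ L₂ R₂ hR₁ hR₂ Δxdot₁ Δx₁
    Δxdot₂ Δx₂ Δu₁ Δy₁ Δu₂ Δy₂ Δv₁ Δv₂ hdiss₁ hdiss₂ hint₁ hint₂
end

section
/- Differential dominance implies incremental dominance for smooth vector fields: let f : ℝ^n → ℝ^n be continuously differentiable, P ∈ ℝ^{n×n} symmetric, γ ≥ 0 and ε ≥ 0, and suppose that for every x ∈ ℝ^n the linear matrix inequality ∂f(x)ᵀ P + P ∂f(x) + 2γP + εI ⪯ 0 holds, where ∂f(x) is the Jacobian of f at x. Then for every x₁, x₂ ∈ ℝ^n, 2 (x₁ − x₂)ᵀ P (f(x₁) − f(x₂)) + 2γ (x₁ − x₂)ᵀ P (x₁ − x₂) + ε ‖x₁ − x₂‖² ≤ 0. -/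
/-! Along the segment from `x₂` to `x₁`, the derivative of `t ↦ Δxᵀ P f(x₂ + t Δx)` is
`Δxᵀ P ∂f Δx`, which the LMI bounds by `-(2γ Δxᵀ P Δx + ε ‖Δx‖²) / 2` (the symmetry of `P`
turns `Δxᵀ (∂fᵀ P + P ∂f) Δx` into `2 Δxᵀ P ∂f Δx`); the mean value theorem concludes. -/

open Matrix

/-- The Jacobian matrix of `f : ℝⁿ → ℝⁿ` at `x`. -/
noncomputable def jacobianMatrix (n : ℕ) (f : (Fin n → ℝ) → (Fin n → ℝ))
    (x : Fin n → ℝ) : Matrix (Fin n) (Fin n) ℝ :=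
  Matrix.of fun i j => fderiv ℝ f x (Pi.single j 1) i

theorem jacobianMatrix_eq_toMatrix' (n : ℕ) (f : (Fin n → ℝ) → (Fin n → ℝ)) (x : Fin n → ℝ) :
    jacobianMatrix n f x = LinearMap.toMatrix' (fderiv ℝ f x : (Fin n → ℝ) →ₗ[ℝ] Fin n → ℝ) :=
  rfl

theorem jacobianMatrix_mulVec (n : ℕ) (f : (Fin n → ℝ) → (Fin n → ℝ)) (x v : Fin n → ℝ) :
    jacobianMatrix n f x *ᵥ v = fderiv ℝ f x v := by
  rw [jacobianMatrix_eq_toMatrix', LinearMap.toMatrix'_mulVec]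
  rfl

theorem ContinuousLinearMap.apply_sub_le_of_apply_fderiv_le {E F : Type*}
    [NormedAddCommGroup E] [NormedSpace ℝ E] [NormedAddCommGroup F] [NormedSpace ℝ F]
    {f : E → F} (hf : Differentiable ℝ f) (L : F →L[ℝ] ℝ) (x v : E) {c : ℝ}
    (hc : ∀ y, L (fderiv ℝ f y v) ≤ c) : L (f (x + v) - f x) ≤ c := by
  have hderiv : ∀ t : ℝ, HasDerivAt (fun t : ℝ => L (f (x + t • v)))
      (L (fderiv ℝ f (x + t • v) v)) t := by
    intro t
    have hline : HasDerivAt (fun t : ℝ => x + t • v) v t := by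
      simpa using ((hasDerivAt_id t).smul_const v).const_add x
    exact L.hasFDerivAt.comp_hasDerivAt t ((hf _).hasFDerivAt.comp_hasDerivAt t hline)
  obtain ⟨t, -, ht⟩ := exists_hasDerivAt_eq_slope _ _ zero_lt_one
    (continuous_iff_continuousAt.2 fun t => (hderiv t).continuousAt).continuousOn
    (fun t _ => hderiv t)
  have hslope := hc (x + t • v)
  rw [ht] at hslope
  simpa using hslope

section QuadraticForm

variable {ι : Type*} [Fintype ι]

theorem dotProduct_transpose_mul_add_mul_mulVec {A P : Matrix ι ι ℝ} (hP : P.IsSymm)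
    (v : ι → ℝ) : v ⬝ᵥ (Aᵀ * P + P * A) *ᵥ v = 2 * (v ⬝ᵥ P *ᵥ (A *ᵥ v)) := by
  have hAP : v ⬝ᵥ (Aᵀ * P) *ᵥ v = v ⬝ᵥ P *ᵥ (A *ᵥ v) := by
    rw [dotProduct_mulVec v P, ← mulVec_transpose, hP.eq, ← mulVec_mulVec,
      dotProduct_mulVec v Aᵀ, vecMul_transpose, dotProduct_comm]
  rw [add_mulVec, dotProduct_add, hAP, ← mulVec_mulVec]
  ring

theorem dotProduct_mulVec_nonpos_of_posSemidef_neg {M : Matrix ι ι ℝ} (hM : (-M).PosSemidef)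
    (v : ι → ℝ) : v ⬝ᵥ M *ᵥ v ≤ 0 := by
  simpa [neg_mulVec] using hM.dotProduct_mulVec_nonneg v

theorem quadratic_le_zero_of_posSemidef_neg [DecidableEq ι] {A P : Matrix ι ι ℝ}
    (hP : P.IsSymm) {γ ε : ℝ}
    (hLMI : (-(Aᵀ * P + P * A + (2 * γ) • P + ε • 1)).PosSemidef) (v : ι → ℝ) :
    2 * (v ⬝ᵥ P *ᵥ (A *ᵥ v)) + 2 * γ * (v ⬝ᵥ P *ᵥ v) + ε * (v ⬝ᵥ v) ≤ 0 := by
  have h := dotProduct_mulVec_nonpos_of_posSemidef_neg hLMI v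
  rwa [add_mulVec, add_mulVec, dotProduct_add, dotProduct_add,
    dotProduct_transpose_mul_add_mul_mulVec hP, smul_mulVec, smul_mulVec, one_mulVec,
    dotProduct_smul, dotProduct_smul, smul_eq_mul, smul_eq_mul] at h

end QuadraticForm

theorem differential_dominance_implies_incremental_general
    (n : ℕ) (f : (Fin n → ℝ) → (Fin n → ℝ)) (hf : ContDiff ℝ 1 f)
    (P : Matrix (Fin n) (Fin n) ℝ) (hPsymm : P.IsSymm)
    (γ ε : ℝ)
    (hLMI : ∀ x : Fin n → ℝ,
      (-((jacobianMatrix n f x)ᵀ * P + P * jacobianMatrix n f x +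
          (2 * γ) • P + ε • 1)).PosSemidef) :
    ∀ x₁ x₂ : Fin n → ℝ,
      2 * ((x₁ - x₂) ⬝ᵥ P.mulVec (f x₁ - f x₂)) +
        2 * γ * ((x₁ - x₂) ⬝ᵥ P.mulVec (x₁ - x₂)) +
        ε * ((x₁ - x₂) ⬝ᵥ (x₁ - x₂)) ≤ 0 := by
  intro x₁ x₂
  set v := x₁ - x₂
  let L : (Fin n → ℝ) →L[ℝ] ℝ :=
    LinearMap.toContinuousLinearMap (dotProductBilin ℝ ℝ (v ᵥ* P))
  have hL : ∀ w, L w = v ⬝ᵥ P *ᵥ w := fun w => (dotProduct_mulVec v P w).symm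
  have hslope := L.apply_sub_le_of_apply_fderiv_le (hf.differentiable one_ne_zero) x₂ v
    (c := -(2 * γ * (v ⬝ᵥ P *ᵥ v) + ε * (v ⬝ᵥ v)) / 2) fun y => by
      have hquad := quadratic_le_zero_of_posSemidef_neg hPsymm (hLMI y) v
      rw [hL, ← jacobianMatrix_mulVec]
      linarith
  rw [hL, add_sub_cancel] at hslope
  linarith

/-- Differential dominance implies incremental dominance for smooth vector
fields: if `∂f(x)ᵀP + P∂f(x) + 2γP + εI ⪯ 0` at every point `x`, then
`2 Δxᵀ P (f(x₁) − f(x₂)) + 2γ Δxᵀ P Δx + ε‖Δx‖² ≤ 0` for every `x₁, x₂`,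
where `Δx = x₁ − x₂`. -/
theorem differential_dominance_implies_incremental
    (n : ℕ) (f : (Fin n → ℝ) → (Fin n → ℝ)) (hf : ContDiff ℝ 1 f)
    (P : Matrix (Fin n) (Fin n) ℝ) (hPsymm : P.IsSymm)
    (γ ε : ℝ) (hγ : 0 ≤ γ) (hε : 0 ≤ ε)
    (hLMI : ∀ x : Fin n → ℝ,
      (-((jacobianMatrix n f x)ᵀ * P + P * jacobianMatrix n f x +
          (2 * γ) • P + ε • 1)).PosSemidef) :
    ∀ x₁ x₂ : Fin n → ℝ,
      2 * ((x₁ - x₂) ⬝ᵥ P.mulVec (f x₁ - f x₂)) +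
        2 * γ * ((x₁ - x₂) ⬝ᵥ P.mulVec (x₁ - x₂)) +
        ε * ((x₁ - x₂) ⬝ᵥ (x₁ - x₂)) ≤ 0 :=
  differential_dominance_implies_incremental_general n f hf P hPsymm γ ε hLMI
end

section
/- The saturated op-amp model is strictly 0-passive: let R_a, C_a, α, E₁, E₂ be positive reals and let 0 ≤ γ < 1/(R_a C_a). Then there exist p > 0 and ε > 0 such that for all (x, I) and (x′, I′) in the saturation relation S(E₁, E₂) and all v, v′ ∈ ℝ, setting Δx = x − x′, ΔI = I − I′, Δv = v − v′, and Δẋ = −Δx/(R_a C_a) + (α/C_a)Δv − (1/C_a)ΔI, one has 2 p Δẋ Δx + 2γ p Δx² + ε Δx² ≤ 2 Δx Δv. -/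
/-!
Take `p = C_a / α`: then `2 p (α / C_a) Δv Δx` is exactly the supply `2 Δx Δv`, and what remains of
the left-hand side is `-(2/α) (1/R_a - γ C_a) Δx² - (2/α) ΔI Δx + ε Δx²`. The margin
`1/R_a - γ C_a` is positive because `γ < 1/(R_a C_a)`, so `ε = (1/R_a - γ C_a)/α` uses up only
half of the first term, and `ΔI Δx ≥ 0` because the saturation relation is a monotone graph.
-/

/-- The saturation relation
`S(E₁,E₂) = {(v,i) : (v = E₁ ∧ i ≥ 0) ∨ (−E₂ < v < E₁ ∧ i = 0) ∨ (v = −E₂ ∧ i ≤ 0)}`. -/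
def satRel (E₁ E₂ : ℝ) : Set (ℝ × ℝ) :=
  {p | (p.1 = E₁ ∧ 0 ≤ p.2) ∨ (-E₂ < p.1 ∧ p.1 < E₁ ∧ p.2 = 0) ∨ (p.1 = -E₂ ∧ p.2 ≤ 0)}

lemma satRel_monotone {E₁ E₂ x I x' I' : ℝ} (hE : -E₂ ≤ E₁)
    (h : (x, I) ∈ satRel E₁ E₂) (h' : (x', I') ∈ satRel E₁ E₂) :
    0 ≤ (I - I') * (x - x') := by
  rcases h with ⟨rfl, hI⟩ | ⟨hx₁, hx₂, rfl⟩ | ⟨rfl, hI⟩ <;>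
    rcases h' with ⟨rfl, hI'⟩ | ⟨hx₁', hx₂', rfl⟩ | ⟨rfl, hI'⟩ <;>
    nlinarith

lemma sub_mul_pos_of_lt_one_div_mul {Ra Ca γ : ℝ} (hCa : 0 < Ca)
    (hγ : γ < 1 / (Ra * Ca)) : 0 < 1 / Ra - γ * Ca := by
  rw [← div_div, lt_div_iff₀ hCa] at hγ
  exact sub_pos.mpr hγ

lemma opamp_dissipation_eq {Ra Ca α γ : ℝ} (hCa : Ca ≠ 0) (hα : α ≠ 0) (dx dI dv : ℝ) :
    2 * (Ca / α) * (-dx / (Ra * Ca) + (α / Ca) * dv - (1 / Ca) * dI) * dx +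
        2 * γ * (Ca / α) * dx ^ 2 + (1 / Ra - γ * Ca) / α * dx ^ 2 =
      2 * dx * dv - (1 / Ra - γ * Ca) / α * dx ^ 2 - (2 / α) * (dI * dx) := by
  field_simp
  ring

theorem opamp_strictly_zero_passive_general
    (Ra Ca α E₁ E₂ γ : ℝ)
    (hCa : 0 < Ca) (hα : 0 < α) (hE₁ : 0 < E₁) (hE₂ : 0 < E₂)
    (hγ₁ : γ < 1 / (Ra * Ca)) :
    ∃ p > (0:ℝ), ∃ ε > (0:ℝ),
      ∀ x I x' I' v v' : ℝ,
        (x, I) ∈ satRel E₁ E₂ → (x', I') ∈ satRel E₁ E₂ →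
        2 * p * (-(x - x') / (Ra * Ca) + (α / Ca) * (v - v') - (1 / Ca) * (I - I')) * (x - x') +
          2 * γ * p * (x - x') ^ 2 + ε * (x - x') ^ 2 ≤
        2 * (x - x') * (v - v') := by
  have hmargin := sub_mul_pos_of_lt_one_div_mul hCa hγ₁
  refine ⟨Ca / α, by positivity, (1 / Ra - γ * Ca) / α, by positivity, ?_⟩
  intro x I x' I' v v' h h'
  rw [opamp_dissipation_eq hCa.ne' hα.ne']
  have hmono := satRel_monotone (by linarith) h h'
  have hquad : 0 ≤ (1 / Ra - γ * Ca) / α * (x - x') ^ 2 := by positivity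
  have hcross : 0 ≤ (2 / α) * ((I - I') * (x - x')) := by positivity
  linarith

/-- The saturated op-amp model is strictly 0-passive: for every rate
`0 ≤ γ < 1/(R_a C_a)` there exist a positive storage coefficient `p` and
`ε > 0` such that the incremental dissipation inequality
`2 p Δẋ Δx + 2γp Δx² + ε Δx² ≤ 2 Δx Δv` holds along the increments of the
op-amp dynamics. -/
theorem opamp_strictly_zero_passive
    (Ra Ca α E₁ E₂ γ : ℝ)
    (hRa : 0 < Ra) (hCa : 0 < Ca) (hα : 0 < α) (hE₁ : 0 < E₁) (hE₂ : 0 < E₂)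
    (hγ₀ : 0 ≤ γ) (hγ₁ : γ < 1 / (Ra * Ca)) :
    ∃ p > (0:ℝ), ∃ ε > (0:ℝ),
      ∀ x I x' I' v v' : ℝ,
        (x, I) ∈ satRel E₁ E₂ → (x', I') ∈ satRel E₁ E₂ →
        2 * p * (-(x - x') / (Ra * Ca) + (α / Ca) * (v - v') - (1 / Ca) * (I - I')) * (x - x') +
          2 * γ * p * (x - x') ^ 2 + ε * (x - x') ^ 2 ≤
        2 * (x - x') * (v - v') :=
  opamp_strictly_zero_passive_general Ra Ca α E₁ E₂ γ hCa hα hE₁ hE₂ hγ₁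
end

section
/- A slow first-order lag is strictly 1-passive: let a₁ > 0, b₁ > 0 and γ > b₁. Then there exist p < 0 and ε > 0 such that for all x, x′, u, u′ ∈ ℝ, setting Δx = x − x′, Δu = u − u′, Δẋ = −b₁ Δx + a₁ Δu, and Δy = −Δx, one has 2 p Δẋ Δx + 2γ p Δx² + ε Δx² ≤ 2 Δy Δu. -/
/-!
With the storage coefficient `p = -1/a₁` the cross term `2 p a₁ Δu Δx` of the storage derivative
cancels the supply rate `2 Δy Δu = -2 Δx Δu` exactly, so what remains is
`2 (γ - b₁) p Δx² = -2 (γ - b₁)/a₁ · Δx²`, which is negative definite because `γ > b₁`.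
Half of this margin, `ε = (γ - b₁)/a₁`, is then available as the strictness constant.
-/

theorem first_order_lag_storage_balance (a b γ d v : ℝ) (ha : a ≠ 0) :
    2 * (-1 / a) * (-b * d + a * v) * d + 2 * γ * (-1 / a) * d ^ 2 =
      2 * (-d) * v - 2 * ((γ - b) / a) * d ^ 2 := by
  field_simp
  ring

theorem first_order_lag_strictly_one_passive_general
    (a₁ b₁ γ : ℝ) (ha₁ : 0 < a₁) (hγ : b₁ < γ) :
    ∃ p < (0:ℝ), ∃ ε > (0:ℝ),
      ∀ x x' u u' : ℝ,
        2 * p * (-b₁ * (x - x') + a₁ * (u - u')) * (x - x') +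
          2 * γ * p * (x - x') ^ 2 + ε * (x - x') ^ 2 ≤
        2 * (-(x - x')) * (u - u') := by
  have hε : 0 < (γ - b₁) / a₁ := div_pos (sub_pos.mpr hγ) ha₁
  refine ⟨-1 / a₁, div_neg_of_neg_of_pos neg_one_lt_zero ha₁, (γ - b₁) / a₁, hε, ?_⟩
  intro x x' u u'
  rw [first_order_lag_storage_balance a₁ b₁ γ (x - x') (u - u') ha₁.ne']
  linarith [mul_nonneg hε.le (sq_nonneg (x - x'))]

/-- A slow first-order lag is strictly 1-passive: if `a₁ > 0`, `b₁ > 0` and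
`γ > b₁`, then there exist a negative storage coefficient `p` and `ε > 0`
such that `2 p Δẋ Δx + 2γp Δx² + ε Δx² ≤ 2 Δy Δu` along increments of
`ẋ = −b₁ x + a₁ u`, `y = −x`. -/
theorem first_order_lag_strictly_one_passive
    (a₁ b₁ γ : ℝ) (ha₁ : 0 < a₁) (hb₁ : 0 < b₁) (hγ : b₁ < γ) :
    ∃ p < (0:ℝ), ∃ ε > (0:ℝ),
      ∀ x x' u u' : ℝ,
        2 * p * (-b₁ * (x - x') + a₁ * (u - u')) * (x - x') +
          2 * γ * p * (x - x') ^ 2 + ε * (x - x') ^ 2 ≤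
        2 * (-(x - x')) * (u - u') :=
  first_order_lag_strictly_one_passive_general a₁ b₁ γ ha₁ hγ
end

section
/- The Schmitt trigger is strictly 1-dominant: let R_a, C_a, R₁, R₂, C₁, α, E₁, E₂ be positive reals, set b₁ = (R₁ + R₂)/(R₁ R₂ C₁) and a₁ = 1/(R₂ C₁), and assume b₁ < 1/(R_a C_a). Then there exist γ with b₁ < γ < 1/(R_a C_a), a symmetric matrix P ∈ ℝ^{2×2} with exactly one negative and one positive eigenvalue, and ε > 0 such that for all (x_a, x₁, I) and (x_a′, x₁′, I′) with (x_a, I) ∈ S(E₁, E₂) and (x_a′, I′) ∈ S(E₁, E₂), setting Δx = (x_a − x_a′, x₁ − x₁′), ΔI = I − I′, and Δẋ = (−(x_a − x_a′)/(R_a C_a) + (α/C_a)(x₁ − x₁′) − (1/C_a)ΔI, −b₁(x₁ − x₁′) + a₁(x_a − x_a′)), one has 2 Δẋᵀ P Δx + Δxᵀ(2γP + εI)Δx ≤ 0. -/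
/-!
Take the diagonal storage `P = diag(1, -q)` with `q = α / (C_a a₁)`. This choice of `q` cancels
the cross terms in `Δx_a Δx₁`, so the dissipation inequality splits into the op-amp direction,
negative because `γ < 1/(R_a C_a)`, the RC direction, negative because `b₁ < γ`, and the current
term `-2 Δx_a ΔI / C_a`, nonpositive because the saturation relation is monotone.
-/

open Matrix

lemma satRel_incremental_monotone {E₁ E₂ v i v' i' : ℝ} (hE : -E₂ ≤ E₁)
    (h : (v, i) ∈ satRel E₁ E₂) (h' : (v', i') ∈ satRel E₁ E₂) :
    0 ≤ (v - v') * (i - i') := by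
  rcases h with ⟨hv, hi⟩ | ⟨h1, h2, hi⟩ | ⟨hv, hi⟩ <;>
    rcases h' with ⟨hv', hi'⟩ | ⟨h1', h2', hi'⟩ | ⟨hv', hi'⟩ <;>
    subst_vars <;> nlinarith

lemma Matrix.IsHermitian.card_eigenvalues_neg_and_pos_of_det_neg
    {P : Matrix (Fin 2) (Fin 2) ℝ} (hP : P.IsHermitian) (hdet : P.det < 0) :
    (Finset.univ.filter fun i => hP.eigenvalues i < 0).card = 1 ∧
    (Finset.univ.filter fun i => 0 < hP.eigenvalues i).card = 1 := by
  have hprod : hP.eigenvalues 0 * hP.eigenvalues 1 < 0 := by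
    simpa [hP.det_eq_prod_eigenvalues, Fin.prod_univ_two] using hdet
  have hsigns : (hP.eigenvalues 0 < 0 ∧ 0 < hP.eigenvalues 1) ∨
      (0 < hP.eigenvalues 0 ∧ hP.eigenvalues 1 < 0) := by
    rcases lt_trichotomy (hP.eigenvalues 0) 0 with h0 | h0 | h0
    · exact Or.inl ⟨h0, by nlinarith⟩
    · simp [h0] at hprod
    · exact Or.inr ⟨h0, by nlinarith⟩
  rcases hsigns with ⟨h0, h1⟩ | ⟨h0, h1⟩ <;> constructor <;>
    · rw [Finset.card_filter, Fin.sum_univ_two]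
      simp [h0, h1, asymm h0, asymm h1]

lemma dominance_form_diagonal (p r γ ε f₀ f₁ u w : ℝ) :
    2 * (![f₀, f₁] ⬝ᵥ diagonal ![p, r] *ᵥ ![u, w]) +
        ![u, w] ⬝ᵥ ((2 * γ) • diagonal ![p, r] + ε • 1) *ᵥ ![u, w] =
      2 * p * f₀ * u + 2 * r * f₁ * w + (2 * γ * p + ε) * u ^ 2 + (2 * γ * r + ε) * w ^ 2 := by
  rw [← diagonal_one, ← diagonal_smul, ← diagonal_smul, diagonal_add]
  simp only [dotProduct, Fin.sum_univ_two, mulVec_diagonal, cons_val_zero, cons_val_one,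
    cons_val_fin_one, Pi.smul_apply, smul_eq_mul, mul_one]
  ring

lemma schmitt_increment_dominance {Ra Ca α b₁ a₁ γ q ε u w d : ℝ} (hCa : 0 < Ca)
    (hqa : q * a₁ = α / Ca) (hε₁ : ε ≤ 2 * (1 / (Ra * Ca) - γ)) (hε₂ : ε ≤ 2 * q * (γ - b₁))
    (hud : 0 ≤ u * d) :
    2 * (![-u / (Ra * Ca) + (α / Ca) * w - (1 / Ca) * d, -b₁ * w + a₁ * u] ⬝ᵥ
          diagonal ![1, -q] *ᵥ ![u, w]) +
        ![u, w] ⬝ᵥ ((2 * γ) • diagonal ![1, -q] + ε • 1) *ᵥ ![u, w] ≤ 0 := by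
  rw [dominance_form_diagonal]
  have hcurrent : 0 ≤ u * d / Ca := div_nonneg hud hCa.le
  have hu : 0 ≤ (2 * (1 / (Ra * Ca) - γ) - ε) * u ^ 2 := by nlinarith [sq_nonneg u]
  have hw : 0 ≤ (2 * q * (γ - b₁) - ε) * w ^ 2 := by nlinarith [sq_nonneg w]
  linear_combination hu + hw + 2 * hcurrent - 2 * u * w * hqa

theorem schmitt_trigger_strictly_one_dominant_general
    (Ra Ca R₂ C₁ α E₁ E₂ : ℝ)
    (hCa : 0 < Ca) (hR₂ : 0 < R₂) (hC₁ : 0 < C₁)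
    (hα : 0 < α) (hE₁ : 0 < E₁) (hE₂ : 0 < E₂)
    (b₁ a₁ : ℝ) (ha₁ : a₁ = 1 / (R₂ * C₁))
    (hslow : b₁ < 1 / (Ra * Ca)) :
    ∃ γ : ℝ, b₁ < γ ∧ γ < 1 / (Ra * Ca) ∧
    ∃ P : Matrix (Fin 2) (Fin 2) ℝ, ∃ hP : P.IsHermitian,
      (Finset.univ.filter fun i => hP.eigenvalues i < 0).card = 1 ∧
      (Finset.univ.filter fun i => 0 < hP.eigenvalues i).card = 1 ∧
    ∃ ε > (0:ℝ),
      ∀ xa x₁ I xa' x₁' I' : ℝ,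
        (xa, I) ∈ satRel E₁ E₂ → (xa', I') ∈ satRel E₁ E₂ →
        2 * (![-(xa - xa') / (Ra * Ca) + (α / Ca) * (x₁ - x₁') - (1 / Ca) * (I - I'),
               -b₁ * (x₁ - x₁') + a₁ * (xa - xa')] ⬝ᵥ
             P.mulVec ![xa - xa', x₁ - x₁']) +
          ![xa - xa', x₁ - x₁'] ⬝ᵥ
            ((2 * γ) • P + ε • 1).mulVec ![xa - xa', x₁ - x₁'] ≤ 0 := by
  obtain ⟨γ, hb₁_lt, hγ_lt⟩ := exists_between hslow
  set q := α / (Ca * a₁) with hq_def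
  have ha₁pos : 0 < a₁ := by rw [ha₁]; positivity
  have hq : 0 < q := by positivity
  have hqa : q * a₁ = α / Ca := by rw [hq_def]; field_simp
  have hP := isHermitian_diagonal ![(1 : ℝ), -q]
  have hdet : (diagonal ![(1 : ℝ), -q]).det < 0 := by simp [det_diagonal, hq]
  obtain ⟨hneg, hpos⟩ := hP.card_eigenvalues_neg_and_pos_of_det_neg hdet
  refine ⟨γ, hb₁_lt, hγ_lt, _, hP, hneg, hpos,
    min (2 * (1 / (Ra * Ca) - γ)) (2 * q * (γ - b₁)),
    lt_min (by linarith) (by nlinarith), ?_⟩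
  intro xa x₁ I xa' x₁' I' hsat hsat'
  exact schmitt_increment_dominance hCa hqa (min_le_left _ _) (min_le_right _ _)
    (satRel_incremental_monotone (by linarith) hsat hsat')

/-- The Schmitt trigger is strictly 1-dominant: if the RC network is slower
than the op-amp (`b₁ < 1/(R_a C_a)`), then there exist a rate
`γ ∈ (b₁, 1/(R_a C_a))`, a symmetric `2×2` storage matrix `P` with exactly one
negative and one positive eigenvalue, and `ε > 0` such that the incremental
dominance inequality `2 Δẋᵀ P Δx + Δxᵀ(2γP + εI)Δx ≤ 0` holds along
increments of the Schmitt-trigger dynamics. -/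
theorem schmitt_trigger_strictly_one_dominant
    (Ra Ca R₁ R₂ C₁ α E₁ E₂ : ℝ)
    (hRa : 0 < Ra) (hCa : 0 < Ca) (hR₁ : 0 < R₁) (hR₂ : 0 < R₂) (hC₁ : 0 < C₁)
    (hα : 0 < α) (hE₁ : 0 < E₁) (hE₂ : 0 < E₂)
    (b₁ a₁ : ℝ) (hb₁ : b₁ = (R₁ + R₂) / (R₁ * R₂ * C₁)) (ha₁ : a₁ = 1 / (R₂ * C₁))
    (hslow : b₁ < 1 / (Ra * Ca)) :
    ∃ γ : ℝ, b₁ < γ ∧ γ < 1 / (Ra * Ca) ∧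
    ∃ P : Matrix (Fin 2) (Fin 2) ℝ, ∃ hP : P.IsHermitian,
      (Finset.univ.filter fun i => hP.eigenvalues i < 0).card = 1 ∧
      (Finset.univ.filter fun i => 0 < hP.eigenvalues i).card = 1 ∧
    ∃ ε > (0:ℝ),
      ∀ xa x₁ I xa' x₁' I' : ℝ,
        (xa, I) ∈ satRel E₁ E₂ → (xa', I') ∈ satRel E₁ E₂ →
        2 * (![-(xa - xa') / (Ra * Ca) + (α / Ca) * (x₁ - x₁') - (1 / Ca) * (I - I'),
               -b₁ * (x₁ - x₁') + a₁ * (xa - xa')] ⬝ᵥ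
             P.mulVec ![xa - xa', x₁ - x₁']) +
          ![xa - xa', x₁ - x₁'] ⬝ᵥ
            ((2 * γ) • P + ε • 1).mulVec ![xa - xa', x₁ - x₁'] ≤ 0 :=
  schmitt_trigger_strictly_one_dominant_general Ra Ca R₂ C₁ α E₁ E₂ hCa hR₂ hC₁ hα hE₁ hE₂ b₁ a₁ ha₁
    hslow
end

section
/- Positive realness of the shifted mixed-feedback transfer function: let a₁, a₂, b₁, b₂, γ be real numbers with (b₁ − γ)(b₂ − γ) > 0, a₂(b₂ − γ) − a₁(b₁ − γ) > 0, and a₂(b₁ − γ) − a₁(b₂ − γ) > 0. Define G : ℂ → ℂ by G(s) = ((a₂ − a₁) s + a₂ b₁ − a₁ b₂) / ((s + b₁)(s + b₂)). Then for every ω ∈ ℝ, (iω − γ + b₁)(iω − γ + b₂) ≠ 0 and Re G(iω − γ) > 0. -/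
/-!
With `βₖ = bₖ − γ`, the partial fraction decomposition `G(s) = a₂/(s + b₂) − a₁/(s + b₁)` gives
`Re G(iω − γ) = a₂β₂/(ω² + β₂²) − a₁β₁/(ω² + β₁²)`. Clearing denominators, the sign is that of
`ω² (a₂β₂ − a₁β₁) + β₁β₂ (a₂β₁ − a₁β₂)`, a sum of a nonnegative and a positive term.
-/

open Complex

theorem div_mul_add_eq_div_add_sub_div {K : Type*} [Field K] {s b₁ b₂ : K} (a₁ a₂ : K)
    (h₁ : s + b₁ ≠ 0) (h₂ : s + b₂ ≠ 0) :
    ((a₂ - a₁) * s + (a₂ * b₁ - a₁ * b₂)) / ((s + b₁) * (s + b₂)) =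
      a₂ / (s + b₂) - a₁ / (s + b₁) := by
  field_simp
  ring

namespace Complex

theorem ofReal_mul_I_add_ofReal_ne_zero (ω : ℝ) {β : ℝ} (hβ : β ≠ 0) : (ω : ℂ) * I + β ≠ 0 :=
  fun h => hβ <| by simpa using congrArg re h

theorem re_ofReal_div_ofReal_mul_I_add_ofReal (a ω β : ℝ) :
    ((a : ℂ) / (ω * I + β)).re = a * β / (ω ^ 2 + β ^ 2) := by
  simp [div_re, normSq_apply, pow_two, add_comm]

end Complex

theorem div_sub_div_pos_of_mixed_feedback {a₁ a₂ β₁ β₂ : ℝ} (ω : ℝ) (h₀ : 0 < β₁ * β₂)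
    (h₁ : 0 < a₂ * β₂ - a₁ * β₁) (h₂ : 0 < a₂ * β₁ - a₁ * β₂) :
    0 < a₂ * β₂ / (ω ^ 2 + β₂ ^ 2) - a₁ * β₁ / (ω ^ 2 + β₁ ^ 2) := by
  have hd₁ : 0 < ω ^ 2 + β₁ ^ 2 := by
    have := left_ne_zero_of_mul h₀.ne'
    positivity
  have hd₂ : 0 < ω ^ 2 + β₂ ^ 2 := by
    have := right_ne_zero_of_mul h₀.ne'
    positivity
  have key : 0 < a₂ * β₂ * (ω ^ 2 + β₁ ^ 2) - a₁ * β₁ * (ω ^ 2 + β₂ ^ 2) := by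
    have : 0 ≤ ω ^ 2 * (a₂ * β₂ - a₁ * β₁) := by positivity
    nlinarith [mul_pos h₀ h₂]
  rw [div_sub_div _ _ hd₂.ne' hd₁.ne']
  exact div_pos (by linarith) (mul_pos hd₂ hd₁)

/-- Positive realness of the shifted mixed-feedback transfer function: if
`(b₁ − γ)(b₂ − γ) > 0`, `a₂(b₂ − γ) − a₁(b₁ − γ) > 0` and
`a₂(b₁ − γ) − a₁(b₂ − γ) > 0`, then for
`G(s) = ((a₂ − a₁)s + a₂b₁ − a₁b₂)/((s + b₁)(s + b₂))` and every `ω ∈ ℝ`,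
the shifted denominator is nonzero and `Re G(iω − γ) > 0`. -/
theorem shifted_transfer_function_positive_real
    (a₁ a₂ b₁ b₂ γ : ℝ)
    (h₀ : 0 < (b₁ - γ) * (b₂ - γ))
    (h₁ : 0 < a₂ * (b₂ - γ) - a₁ * (b₁ - γ))
    (h₂ : 0 < a₂ * (b₁ - γ) - a₁ * (b₂ - γ))
    (G : ℂ → ℂ)
    (hG : ∀ s : ℂ, G s = (((a₂ : ℂ) - a₁) * s + ((a₂ : ℂ) * b₁ - a₁ * b₂)) /
      ((s + b₁) * (s + b₂))) :
    ∀ ω : ℝ,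
      ((ω : ℂ) * Complex.I - γ + b₁) * ((ω : ℂ) * Complex.I - γ + b₂) ≠ 0 ∧
      0 < (G ((ω : ℂ) * Complex.I - γ)).re := by
  intro ω
  have shift (b : ℝ) : (ω : ℂ) * I - γ + b = ω * I + ↑(b - γ) := by push_cast; ring
  have hne₁ := ofReal_mul_I_add_ofReal_ne_zero ω (left_ne_zero_of_mul h₀.ne')
  have hne₂ := ofReal_mul_I_add_ofReal_ne_zero ω (right_ne_zero_of_mul h₀.ne')
  rw [shift, shift]
  refine ⟨mul_ne_zero hne₁ hne₂, ?_⟩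
  rw [hG, div_mul_add_eq_div_add_sub_div _ _ ((shift b₁).trans_ne hne₁)
    ((shift b₂).trans_ne hne₂), shift, shift, sub_re,
    re_ofReal_div_ofReal_mul_I_add_ofReal, re_ofReal_div_ofReal_mul_I_add_ofReal]
  exact div_sub_div_pos_of_mixed_feedback ω h₀ h₁ h₂
end

section
/- Parameter regime for 0-passivity of the mixed-feedback network: let a₁ > 0, a₂ > 0, b₁ > 0, b₂ > 0 and let γ satisfy 0 < γ < min{b₁, b₂} and a₂/a₁ > max{(b₁ − γ)/(b₂ − γ), (b₂ − γ)/(b₁ − γ)}. Define G : ℂ → ℂ by G(s) = ((a₂ − a₁) s + a₂ b₁ − a₁ b₂)/((s + b₁)(s + b₂)). Then for every ω ∈ ℝ, Re G(iω − γ) > 0. -/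
/-!
Shifting by `-γ`, the two first-order lags of `G = -a₁/(s + b₁) + a₂/(s + b₂)` get the stable
poles `-(bₖ - γ)`, and on the imaginary axis `Re (a / (β + iω)) = a β / (β² + ω²)`. Clearing
denominators, `Re G(iω - γ) > 0` becomes
`a₁ β₁ (β₂² + ω²) < a₂ β₂ (β₁² + ω²)` with `βₖ = bₖ - γ`; the constant terms compare by
`a₁ β₂ < a₂ β₁` and the `ω²` terms by `a₁ β₁ < a₂ β₂`, which are the two halves of the ratio
condition.
-/

open Complex

lemma mixed_feedback_partial_fractions {a₁ a₂ b₁ b₂ : ℂ} {s : ℂ}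
    (h₁ : s + b₁ ≠ 0) (h₂ : s + b₂ ≠ 0) :
    ((a₂ - a₁) * s + (a₂ * b₁ - a₁ * b₂)) / ((s + b₁) * (s + b₂)) =
      a₂ / (s + b₂) - a₁ / (s + b₁) := by
  field_simp
  ring

lemma re_ofReal_div_ofReal_add_mul_I (a β ω : ℝ) :
    ((a : ℂ) / (β + ω * I)).re = a * β / (β ^ 2 + ω ^ 2) := by
  simp [div_re, normSq_add_mul_I, mul_div_assoc]

lemma div_sq_add_sq_lt_div_sq_add_sq {a₁ a₂ β₁ β₂ : ℝ} (hβ₁ : 0 < β₁) (hβ₂ : 0 < β₂)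
    (hconst : a₁ * β₂ < a₂ * β₁) (hfreq : a₁ * β₁ ≤ a₂ * β₂) (ω : ℝ) :
    a₁ * β₁ / (β₁ ^ 2 + ω ^ 2) < a₂ * β₂ / (β₂ ^ 2 + ω ^ 2) := by
  rw [div_lt_div_iff₀ (by positivity) (by positivity)]
  nlinarith [mul_lt_mul_of_pos_left hconst (mul_pos hβ₁ hβ₂),
    mul_le_mul_of_nonneg_left hfreq (sq_nonneg ω)]

lemma mul_lt_mul_of_div_lt_div {a₁ a₂ β₁ β₂ : ℝ} (ha₁ : 0 < a₁) (hβ₂ : 0 < β₂)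
    (h : β₁ / β₂ < a₂ / a₁) : a₁ * β₁ < a₂ * β₂ := by
  rw [div_lt_div_iff₀ hβ₂ ha₁] at h
  linarith

theorem mixed_feedback_zero_passive_regime_general
    (a₁ a₂ b₁ b₂ γ : ℝ)
    (ha₁ : 0 < a₁) (hγ₁ : γ < min b₁ b₂)
    (hratio : max ((b₁ - γ) / (b₂ - γ)) ((b₂ - γ) / (b₁ - γ)) < a₂ / a₁)
    (G : ℂ → ℂ)
    (hG : ∀ s : ℂ, G s = (((a₂ : ℂ) - a₁) * s + ((a₂ : ℂ) * b₁ - a₁ * b₂)) /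
      ((s + b₁) * (s + b₂))) :
    ∀ ω : ℝ, 0 < (G ((ω : ℂ) * Complex.I - γ)).re := by
  intro ω
  have hβ₁ : 0 < b₁ - γ := sub_pos.2 (lt_min_iff.1 hγ₁).1
  have hβ₂ : 0 < b₂ - γ := sub_pos.2 (lt_min_iff.1 hγ₁).2
  have hshift : ∀ b : ℝ, (ω : ℂ) * I - γ + b = ((b - γ : ℝ) : ℂ) + ω * I := fun b => by
    push_cast; ring
  have hpole : ∀ b : ℝ, 0 < b - γ → (ω : ℂ) * I - γ + b ≠ 0 := fun b hβ h => by
    simpa [hshift, hβ.ne'] using congrArg re h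
  rw [hG, mixed_feedback_partial_fractions (hpole b₁ hβ₁) (hpole b₂ hβ₂), hshift, hshift, sub_re,
    re_ofReal_div_ofReal_add_mul_I, re_ofReal_div_ofReal_add_mul_I, sub_pos]
  exact div_sq_add_sq_lt_div_sq_add_sq hβ₁ hβ₂
    (mul_lt_mul_of_div_lt_div ha₁ hβ₁ ((le_max_right _ _).trans_lt hratio))
    (mul_lt_mul_of_div_lt_div ha₁ hβ₂ ((le_max_left _ _).trans_lt hratio)).le ω

/-- Parameter regime for 0-passivity of the mixed-feedback network: if
`a₁, a₂, b₁, b₂ > 0`, `0 < γ < min{b₁, b₂}` and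
`a₂/a₁ > max{(b₁ − γ)/(b₂ − γ), (b₂ − γ)/(b₁ − γ)}`, then for
`G(s) = ((a₂ − a₁)s + a₂b₁ − a₁b₂)/((s + b₁)(s + b₂))` and every `ω ∈ ℝ`,
`Re G(iω − γ) > 0`. -/
theorem mixed_feedback_zero_passive_regime
    (a₁ a₂ b₁ b₂ γ : ℝ)
    (ha₁ : 0 < a₁) (ha₂ : 0 < a₂) (hb₁ : 0 < b₁) (hb₂ : 0 < b₂)
    (hγ₀ : 0 < γ) (hγ₁ : γ < min b₁ b₂)
    (hratio : max ((b₁ - γ) / (b₂ - γ)) ((b₂ - γ) / (b₁ - γ)) < a₂ / a₁)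
    (G : ℂ → ℂ)
    (hG : ∀ s : ℂ, G s = (((a₂ : ℂ) - a₁) * s + ((a₂ : ℂ) * b₁ - a₁ * b₂)) /
      ((s + b₁) * (s + b₂))) :
    ∀ ω : ℝ, 0 < (G ((ω : ℂ) * Complex.I - γ)).re :=
  mixed_feedback_zero_passive_regime_general a₁ a₂ b₁ b₂ γ ha₁ hγ₁ hratio G hG
end
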